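/- arXiv:2406.03300 — 2 statements merged into one kernel-verified Lean document; each statement's English description precedes it below -/
import Mathlib

section
/- Let N ≥ 2 and let φ ∈ ℂ with φ ≠ 0 and φ⁴ ≠ 1. Suppose K ∈ ℂ[X₁,…,X_N] is a symmetric polynomial satisfying both K(−x, x, x₃, …, x_N) = 0 for all complex values and K(φx, φ⁻¹x, x₃, …, x_N) = 0 for all complex values, and whose partial degree in two variables satisfies deg₂(K) ≤ 4N − 6. Then K = 0. -/
/-!
Symmetry spreads the two vanishing conditions to every hyperplane `xᵢ = -xⱼ`, `xᵢ = φ² xⱼ`,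
so each linear form `Xᵢ - c Xⱼ` with `c ∈ {-1, φ², φ⁻²}` divides `K`. These forms are prime,
and for `i ∈ {0, 1}`, `i < j` they are pairwise non-associate because `φ⁴ ≠ 1`; hence their
product, `3 (2N - 3) = 6N - 9` factors each involving `X₀` or `X₁`, divides `K`. The partial
degree is additive on products, being the `t`-degree of the substitution `Xᵢ ↦ t Xᵢ` (`i < 2`),
so a nonzero `K` would have `deg₂ K ≥ 6N - 9 > 4N - 6`.
-/

open MvPolynomial

/-- The `k`-th partial degree of a multivariate polynomial: the total degree of `P`
regarded as a polynomial in the first `k` variables. -/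
noncomputable def partialDeg {N : ℕ} (k : ℕ) (P : MvPolynomial (Fin N) ℂ) : ℕ :=
  P.support.sup fun m => ∑ i ∈ Finset.univ.filter (fun i : Fin N => i.val < k), m i

theorem Equiv.Perm.exists_apply_eq_and_apply_eq {α : Type*} [DecidableEq α] {a b i j : α}
    (hab : a ≠ b) (hij : i ≠ j) : ∃ π : Equiv.Perm α, π a = i ∧ π b = j := by
  set τ := Equiv.swap a i
  have hτ : τ (τ j) = j := Equiv.swap_apply_self a i j
  have hτj : τ j ≠ a := fun h => hij (by rw [← hτ, h, Equiv.swap_apply_left])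
  refine ⟨τ * Equiv.swap b (τ j), ?_, ?_⟩
  · simp [Equiv.swap_apply_of_ne_of_ne hab hτj.symm, τ]
  · simp [hτ]

namespace MvPolynomial

variable {σ R : Type*}

section WeightedDegree

variable [CommSemiring R]

noncomputable def weightedHomogenization (w : σ → ℕ) :
    MvPolynomial σ R →ₐ[R] Polynomial (MvPolynomial σ R) :=
  aeval fun i => Polynomial.C (X i) * Polynomial.X ^ w i

theorem weightedHomogenization_monomial (w : σ → ℕ) (d : σ →₀ ℕ) (r : R) :
    weightedHomogenization w (monomial d r) =
      Polynomial.C (monomial d r) * Polynomial.X ^ Finsupp.weight w d := by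
  induction d using Finsupp.induction with
  | zero => simp [weightedHomogenization, monomial_zero']
  | single_add i k d _ _ ih =>
    rw [monomial_single_add, map_mul, map_pow, ih]
    simp only [weightedHomogenization, aeval_X, map_add, Finsupp.weight_single, smul_eq_mul,
      map_mul, map_pow, pow_add, mul_pow, ← pow_mul]
    ring

theorem coeff_weightedHomogenization (w : σ → ℕ) (P : MvPolynomial σ R) (n : ℕ) :
    (weightedHomogenization w P).coeff n = weightedHomogeneousComponent w n P := by
  classical
  induction P using MvPolynomial.induction_on' with
  | monomial d r =>
    rw [weightedHomogenization_monomial, Polynomial.coeff_C_mul_X_pow]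
    ext m
    rw [coeff_weightedHomogeneousComponent]
    rcases eq_or_ne d m with rfl | hdm
    · split_ifs <;> simp_all
    · simp [coeff_monomial, hdm, apply_ite]
  | add P Q hP hQ => simp [hP, hQ]

theorem weightedHomogeneousComponent_weightedTotalDegree_ne_zero (w : σ → ℕ)
    {P : MvPolynomial σ R} (hP : P ≠ 0) :
    weightedHomogeneousComponent w (weightedTotalDegree w P) P ≠ 0 := by
  obtain ⟨d, hd, hdeg⟩ := Finset.exists_mem_eq_sup P.support (support_nonempty.mpr hP)
    (Finsupp.weight w)
  intro h
  have := congrArg (coeff d) h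
  rw [coeff_weightedHomogeneousComponent,
    if_pos (show _ = weightedTotalDegree w P from hdeg.symm), coeff_zero] at this
  exact mem_support_iff.mp hd this

theorem weightedHomogenization_ne_zero (w : σ → ℕ) {P : MvPolynomial σ R} (hP : P ≠ 0) :
    weightedHomogenization w P ≠ 0 := fun h =>
  weightedHomogeneousComponent_weightedTotalDegree_ne_zero w hP <| by
    rw [← coeff_weightedHomogenization, h, Polynomial.coeff_zero]

theorem natDegree_weightedHomogenization (w : σ → ℕ) {P : MvPolynomial σ R} (hP : P ≠ 0) :
    (weightedHomogenization w P).natDegree = weightedTotalDegree w P := by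
  refine Polynomial.natDegree_eq_of_le_of_coeff_ne_zero ?_ ?_
  · exact Polynomial.natDegree_le_iff_coeff_eq_zero.mpr fun n hn => by
      rw [coeff_weightedHomogenization, weightedHomogeneousComponent_eq_zero _ _ hn]
  · rw [coeff_weightedHomogenization]
    exact weightedHomogeneousComponent_weightedTotalDegree_ne_zero w hP

variable [NoZeroDivisors R]

theorem weightedTotalDegree_mul_of_noZeroDivisors (w : σ → ℕ) {P Q : MvPolynomial σ R}
    (hP : P ≠ 0) (hQ : Q ≠ 0) :
    weightedTotalDegree w (P * Q) = weightedTotalDegree w P + weightedTotalDegree w Q := by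
  have hPQ : P * Q ≠ 0 := mul_ne_zero hP hQ
  rw [← natDegree_weightedHomogenization w hP, ← natDegree_weightedHomogenization w hQ,
    ← natDegree_weightedHomogenization w hPQ, map_mul,
    Polynomial.natDegree_mul (weightedHomogenization_ne_zero w hP)
      (weightedHomogenization_ne_zero w hQ)]

theorem weightedTotalDegree_prod_of_noZeroDivisors {ι : Type*} (w : σ → ℕ) (s : Finset ι)
    (P : ι → MvPolynomial σ R) (hP : ∀ i ∈ s, P i ≠ 0) :
    weightedTotalDegree w (∏ i ∈ s, P i) = ∑ i ∈ s, weightedTotalDegree w (P i) := by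
  classical
  induction s using Finset.induction_on with
  | empty =>
    exact isWeightedHomogeneous_zero_iff_weightedTotalDegree_eq_zero.mp
      (isWeightedHomogeneous_one (R := R) w)
  | insert i s hi ih =>
    have : Nontrivial (MvPolynomial σ R) :=
      nontrivial_of_ne _ _ (hP i (Finset.mem_insert_self i s))
    rw [Finset.prod_insert hi, Finset.sum_insert hi, weightedTotalDegree_mul_of_noZeroDivisors w
      (hP i (Finset.mem_insert_self i s)) (Finset.prod_ne_zero_iff.mpr fun j hj =>
        hP j (Finset.mem_insert_of_mem hj)), ih fun j hj => hP j (Finset.mem_insert_of_mem hj)]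

theorem weightedTotalDegree_le_of_dvd_of_noZeroDivisors (w : σ → ℕ) {P Q : MvPolynomial σ R}
    (h : P ∣ Q) (hQ : Q ≠ 0) : weightedTotalDegree w P ≤ weightedTotalDegree w Q := by
  obtain ⟨S, rfl⟩ := h
  rw [weightedTotalDegree_mul_of_noZeroDivisors w (left_ne_zero_of_mul hQ)
    (right_ne_zero_of_mul hQ)]
  exact Nat.le_add_right _ _

end WeightedDegree

section LinearForms

variable [CommRing R]

theorem X_sub_dvd_sub_bind₁_update [DecidableEq σ] (a : σ) (f P : MvPolynomial σ R) :
    X a - f ∣ P - bind₁ (Function.update X a f) P := by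
  -- `ψ` views `P` as a polynomial in `X a`; the claim is then `Polynomial.sub_dvd_eval_sub`.
  let ψ : MvPolynomial σ R →ₐ[R] Polynomial (MvPolynomial σ R) :=
    aeval (Function.update (fun i => Polynomial.C (X i)) a Polynomial.X)
  have hψ : ∀ g, (ψ P).eval g = bind₁ (Function.update X a g) P := fun g => by
    refine RingHom.congr_fun (f := (Polynomial.evalRingHom g).comp ψ.toRingHom)
      (g := (bind₁ (Function.update X a g)).toRingHom) ?_ P
    refine MvPolynomial.ringHom_ext (fun r => by simp [ψ]) fun i => ?_
    rcases eq_or_ne i a with rfl | hi <;> simp [ψ, *]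
  have := Polynomial.sub_dvd_eval_sub (X a) f (ψ P)
  rwa [hψ, hψ, Function.update_eq_self, bind₁_X_left] at this

theorem X_sub_C_mul_X_dvd_iff [DecidableEq σ] {a b : σ} (hba : b ≠ a) (c : R)
    (P : MvPolynomial σ R) :
    X a - C c * X b ∣ P ↔ bind₁ (Function.update X a (C c * X b)) P = 0 := by
  refine ⟨?_, fun h => ?_⟩
  · rintro ⟨S, rfl⟩
    simp [hba]
  · have := X_sub_dvd_sub_bind₁_update a (C c * X b) P
    rwa [h, sub_zero] at this

theorem prime_X_sub_C_mul_X [IsDomain R] {a b : σ} (hab : a ≠ b) (c : R) :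
    Prime (X a - C c * X b) := by
  classical
  have hne : X a - C c * X b ≠ 0 := fun h =>
    one_ne_zero (α := R) (by simpa [hab.symm] using congrArg (eval (Pi.single a 1)) h)
  have hunit : ¬IsUnit (X a - C c * X b) := fun h =>
    not_isUnit_zero (M₀ := R) (by simpa using h.map (eval 0))
  refine ⟨hne, hunit, fun P Q h => ?_⟩
  simpa only [X_sub_C_mul_X_dvd_iff hab.symm, map_mul, mul_eq_zero] using h

theorem X_sub_C_mul_X_dvd_iff_forall_eval [IsDomain R] [Infinite R] {a b : σ} (hba : b ≠ a)
    (c : R) (P : MvPolynomial σ R) :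
    X a - C c * X b ∣ P ↔ ∀ v : σ → R, v a = c * v b → eval v P = 0 := by
  classical
  refine ⟨fun ⟨S, hS⟩ v hv => by simp [hS, hv], fun h => ?_⟩
  rw [X_sub_C_mul_X_dvd_iff hba]
  refine MvPolynomial.funext fun v => ?_
  have hv : (fun i => eval v (Function.update X a (C c * X b) i)) =
      Function.update v a (c * v b) := by
    funext i
    rcases eq_or_ne i a with rfl | hi <;> simp [*]
  change eval₂Hom (RingHom.id R) v _ = _
  rw [eval₂Hom_bind₁, map_zero]
  exact (congrArg (eval · P) hv).trans (h _ (by simp [hba]))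

theorem eq_of_X_sub_C_mul_X_dvd [Nontrivial R] {a b a' b' : σ} {c c' : R} (hab : a ≠ b)
    (ha'b' : a' ≠ b') (hc : c ≠ 0) (h : X a - C c * X b ∣ X a' - C c' * X b') :
    (a' = a ∧ b' = b ∧ c' = c) ∨ (a' = b ∧ b' = a) := by
  classical
  -- `X a' - c' X b'` vanishes on the hyperplane `v a = c v b`, parametrised by `w`.
  have H : ∀ w : σ → R, (Function.update w a (c * w b)) a' =
      c' * (Function.update w a (c * w b)) b' := by
    intro w
    obtain ⟨S, hS⟩ := h
    have := congrArg (eval (Function.update w a (c * w b))) hS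
    simpa [hab.symm, sub_eq_zero] using this
  rcases eq_or_ne a' a with rfl | ha'a
  · have := H (Pi.single b 1)
    rw [Function.update_self, Function.update_of_ne ha'b'.symm, Pi.single_eq_same, mul_one]
      at this
    rcases eq_or_ne b' b with rfl | hb'b
    · exact Or.inl ⟨rfl, rfl, by simpa using this.symm⟩
    · simp [Pi.single_eq_of_ne hb'b, hc] at this
  · have := H (Pi.single a' 1)
    rw [Function.update_of_ne ha'a, Pi.single_eq_same] at this
    rcases eq_or_ne b' a with rfl | hb'a
    · rcases eq_or_ne b a' with rfl | hba'
      · simp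
      · simp [Pi.single_eq_of_ne hba'] at this
    · simp [Function.update_of_ne hb'a, Pi.single_eq_of_ne ha'b'.symm] at this

theorem le_weightedTotalDegree_X_sub_C_mul_X [Nontrivial R] (w : σ → ℕ) {a b : σ} (hab : a ≠ b)
    (c : R) : w a ≤ weightedTotalDegree w (X a - C c * X b) := by
  classical
  have := le_weightedTotalDegree w (d := Finsupp.single a 1) (φ := X a - C c * X b) ?_
  · simpa [Finsupp.weight_single] using this
  · simp [coeff_X, Finsupp.single_left_inj, hab.symm]

end LinearForms

theorem IsSymmetric.eval_eq_zero_of_apply_eq_mul [CommSemiring R] {P : MvPolynomial σ R}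
    (hP : P.IsSymmetric) {a b : σ} (hab : a ≠ b) {c : R}
    (h : ∀ v : σ → R, v a = c * v b → eval v P = 0) {i j : σ} (hij : i ≠ j) (v : σ → R)
    (hv : v i = c * v j) : eval v P = 0 := by
  classical
  obtain ⟨π, hπa, hπb⟩ := Equiv.Perm.exists_apply_eq_and_apply_eq hab hij
  rw [← hP π, eval_rename]
  exact h _ (by simpa [hπa, hπb] using hv)

theorem sum_weightedTotalDegree_le_of_forall_dvd {ι : Type*} [Fintype ι] [CommRing R]
    [IsDomain R] [UniqueFactorizationMonoid R] (w : σ → ℕ) {F : ι → MvPolynomial σ R}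
    (hF : ∀ i, Irreducible (F i)) (hF_dvd : ∀ i j, F i ∣ F j → i = j) {K : MvPolynomial σ R}
    (hK : K ≠ 0) (hdvd : ∀ i, F i ∣ K) :
    ∑ i, weightedTotalDegree w (F i) ≤ weightedTotalDegree w K := by
  have hprod : ∏ i, F i ∣ K := Fintype.prod_dvd_of_isRelPrime
    (fun i j hij => (hF i).isRelPrime_iff_not_dvd.mpr fun h => hij (hF_dvd i j h)) hdvd
  rw [← weightedTotalDegree_prod_of_noZeroDivisors w _ F fun i _ => (hF i).ne_zero]
  exact weightedTotalDegree_le_of_dvd_of_noZeroDivisors w hprod hK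

end MvPolynomial

theorem partialDeg_eq_weightedTotalDegree {N : ℕ} (k : ℕ) (P : MvPolynomial (Fin N) ℂ) :
    partialDeg k P = weightedTotalDegree (fun i : Fin N => if i.val < k then 1 else 0) P := by
  unfold partialDeg weightedTotalDegree
  congr 1
  funext m
  simp [Finsupp.weight_eq_sum, Finset.sum_filter]

theorem injective_neg_one_self_inv {K : Type*} [Field K] {q : K} (hq0 : q ≠ 0)
    (hq : q ^ 2 ≠ 1) : Function.Injective ![-1, q, q⁻¹] := by
  intro s t h
  fin_cases s <;> fin_cases t <;> simp at h ⊢ <;> apply hq <;> grind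

-- The `2N - 3` pairs `(i, j)` with `i ∈ {0, 1}` and `i < j`, where `N = n + 2`.
def pivotPair (n : ℕ) : Fin (n + 1) ⊕ Fin n → Fin (n + 2) × Fin (n + 2) :=
  Sum.elim (fun j => (0, j.succ)) (fun j => (1, j.succ.succ))

theorem pivotPair_injective (n : ℕ) : Function.Injective (pivotPair n) := by
  rintro (j | j) (k | k) h <;> simp_all [pivotPair]

theorem pivotPair_fst_lt_snd {n : ℕ} (x : Fin (n + 1) ⊕ Fin n) :
    (pivotPair n x).1 < (pivotPair n x).2 := by
  rcases x with j | j <;> simp [pivotPair, Fin.lt_def]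

theorem pivotPair_fst_val_lt_two {n : ℕ} (x : Fin (n + 1) ⊕ Fin n) :
    ((pivotPair n x).1 : ℕ) < 2 := by
  rcases x with j | j <;> simp [pivotPair]

section PivotForm

variable {n : ℕ} {κ R : Type*}

noncomputable def pivotForm [CommRing R] (c : κ → R) (x : (Fin (n + 1) ⊕ Fin n) × κ) :
    MvPolynomial (Fin (n + 2)) R :=
  X (pivotPair n x.1).1 - C (c x.2) * X (pivotPair n x.1).2

theorem eq_of_pivotForm_dvd [CommRing R] [Nontrivial R] {c : κ → R}
    (hc : Function.Injective c) (hc0 : ∀ t, c t ≠ 0) {x y : (Fin (n + 1) ⊕ Fin n) × κ}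
    (h : pivotForm c x ∣ pivotForm c y) : x = y := by
  rcases eq_of_X_sub_C_mul_X_dvd (pivotPair_fst_lt_snd x.1).ne (pivotPair_fst_lt_snd y.1).ne
    (hc0 x.2) h with ⟨h1, h2, h3⟩ | ⟨h1, h2⟩
  · exact (Prod.ext (pivotPair_injective n (Prod.ext h1 h2)) (hc h3)).symm
  · have := (pivotPair_fst_lt_snd x.1).trans_eq h1.symm
    exact absurd ((pivotPair_fst_lt_snd y.1).trans_eq h2) this.le.not_gt

theorem pivotForm_dvd [Field R] [Infinite R] {K : MvPolynomial (Fin (n + 2)) R}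
    (hK : K.IsSymmetric) {q : R} (hq : q ≠ 0)
    (hneg : ∀ v : Fin (n + 2) → R, v 0 = -1 * v 1 → eval v K = 0)
    (hpos : ∀ v : Fin (n + 2) → R, v 0 = q * v 1 → eval v K = 0)
    (x : (Fin (n + 1) ⊕ Fin n) × Fin 3) : pivotForm ![-1, q, q⁻¹] x ∣ K := by
  obtain ⟨k, t⟩ := x
  have hij := (pivotPair_fst_lt_snd k).ne
  refine (X_sub_C_mul_X_dvd_iff_forall_eval hij.symm _ K).mpr fun v hv => ?_
  fin_cases t
  · exact hK.eval_eq_zero_of_apply_eq_mul zero_ne_one hneg hij v hv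
  · exact hK.eval_eq_zero_of_apply_eq_mul zero_ne_one hpos hij v hv
  · refine hK.eval_eq_zero_of_apply_eq_mul zero_ne_one hpos hij.symm v ?_
    change v _ = q⁻¹ * v _ at hv
    rw [hv, mul_inv_cancel_left₀ hq]

theorem card_mul_le_partialDeg [Fintype κ] {c : κ → ℂ} (hc : Function.Injective c)
    (hc0 : ∀ t, c t ≠ 0) {K : MvPolynomial (Fin (n + 2)) ℂ} (hK : K ≠ 0)
    (hdvd : ∀ x, pivotForm c x ∣ K) :
    (2 * n + 1) * Fintype.card κ ≤ partialDeg 2 K := by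
  have hirr : ∀ x : (Fin (n + 1) ⊕ Fin n) × κ, Irreducible (pivotForm c x) := fun x =>
    (prime_X_sub_C_mul_X (pivotPair_fst_lt_snd x.1).ne _).irreducible
  have hone : ∀ x : (Fin (n + 1) ⊕ Fin n) × κ, 1 ≤ partialDeg 2 (pivotForm c x) := fun x => by
    rw [partialDeg_eq_weightedTotalDegree]
    refine le_trans ?_ (le_weightedTotalDegree_X_sub_C_mul_X _ (pivotPair_fst_lt_snd x.1).ne _)
    rw [if_pos (pivotPair_fst_val_lt_two x.1)]
  calc (2 * n + 1) * Fintype.card κ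
    _ = ∑ _x : (Fin (n + 1) ⊕ Fin n) × κ, 1 := by
      rw [Finset.sum_const, Finset.card_univ, Fintype.card_prod, Fintype.card_sum,
        Fintype.card_fin, Fintype.card_fin, smul_eq_mul, mul_one]
      ring
    _ ≤ ∑ x, partialDeg 2 (pivotForm c x) := Finset.sum_le_sum fun x _ => hone x
    _ ≤ partialDeg 2 K := by
      simp only [partialDeg_eq_weightedTotalDegree]
      exact sum_weightedTotalDegree_le_of_forall_dvd _ hirr
        (fun _ _ => eq_of_pivotForm_dvd hc hc0) hK hdvd

end PivotForm

/-- a symmetric kernel of both the kinematic equation and a two-particle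
fusion condition with `deg₂ ≤ 4N − 6` vanishes. -/
theorem kernel_with_low_deg2_is_zero (N : ℕ) (hN : 2 ≤ N) (φ : ℂ)
    (hφ0 : φ ≠ 0) (hφ4 : φ ^ 4 ≠ 1)
    (K : MvPolynomial (Fin N) ℂ) (hsym : K.IsSymmetric)
    (hkin : ∀ (x : ℂ) (v : Fin N → ℂ),
      eval (fun i : Fin N => if i.val = 0 then -x else if i.val = 1 then x else v i) K = 0)
    (hfus : ∀ (x : ℂ) (v : Fin N → ℂ),
      eval (fun i : Fin N =>
        if i.val = 0 then φ * x else if i.val = 1 then φ⁻¹ * x else v i) K = 0)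
    (hdeg : partialDeg 2 K ≤ 4 * N - 6) :
    K = 0 := by
  obtain ⟨n, rfl⟩ : ∃ n, N = n + 2 := ⟨N - 2, by omega⟩
  by_contra hK
  have hneg : ∀ v : Fin (n + 2) → ℂ, v 0 = -1 * v 1 → eval v K = 0 := fun v hv => by
    convert hkin (v 1) v using 3
    funext i
    rcases i with ⟨_ | _ | i, hi⟩ <;> simp [hv]
  have hpos : ∀ v : Fin (n + 2) → ℂ, v 0 = φ ^ 2 * v 1 → eval v K = 0 := fun v hv => by
    convert hfus (φ * v 1) v using 3
    funext i
    rcases i with ⟨_ | _ | i, hi⟩ <;> simp [hv, hφ0]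
    ring
  have hq0 : φ ^ 2 ≠ 0 := pow_ne_zero 2 hφ0
  have hcard := card_mul_le_partialDeg (injective_neg_one_self_inv hq0 (by rwa [← pow_mul]))
    (fun t => by fin_cases t <;> simp [hq0]) hK (pivotForm_dvd hsym hq0 hneg hpos)
  simp only [Fintype.card_fin] at hcard
  omega
end

section
/- Define f_α(θ) = tanh(½(θ + iπα))/tanh(½(θ − iπα)) for complex θ, and let S₂₂(θ) = f_{12/18}(θ) · f_{8/18}(θ) · f_{2/18}(θ) be the A₂A₂ scattering amplitude of the E₇ model. Then (θ − 12iπ/18) · S₂₂(θ) tends to i · 2√3 · (cos(π/18)/sin(π/18)) · (cos(π/9)/sin(π/9))² · (sin(2π/9)/cos(2π/9)) as θ → 12iπ/18 (limit along complex θ ≠ 12iπ/18). Equivalently, the residue of S₂₂ at the A₂ self-fusion pole equals i·|Γ₂₂²|² with |Γ₂₂²|² = 2√3 · cot(π/18) · cot²(π/9) · tan(2π/9). -/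
/-!
Only the factor `f_{12/18}` is singular at `θ₀ = 12iπ/18`: its denominator `tanh((θ - θ₀)/2)`
has a simple zero there with derivative `1/2`, so `(θ - θ₀) f_{12/18}(θ) → 2 tanh(θ₀) = -2√3 i`.
The other two factors are continuous at `θ₀`, with the real values
`f_β(iπα) = tan(π(α+β)/2) / tan(π(α-β)/2)`, and trigonometric identities collect the product.
-/

open Filter

/-- The S-matrix building block `f_α(θ) = tanh(½(θ+iπα))/tanh(½(θ−iπα))`. -/
noncomputable def fblock (α : ℝ) (θ : ℂ) : ℂ :=
  Complex.tanh ((θ + Complex.I * (Real.pi : ℂ) * (α : ℂ)) / 2) /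
    Complex.tanh ((θ - Complex.I * (Real.pi : ℂ) * (α : ℂ)) / 2)

/-- The A₂A₂ scattering amplitude of the E₇ model, `S₂₂ = f_{12/18}·f_{8/18}·f_{2/18}`. -/
noncomputable def S22 (θ : ℂ) : ℂ := fblock (12 / 18) θ * fblock (8 / 18) θ * fblock (2 / 18) θ

open scoped Real Topology
open Complex

namespace Complex

lemma continuousAt_tanh {z : ℂ} (h : cosh z ≠ 0) : ContinuousAt tanh z := by
  rw [show tanh = fun w => sinh w / cosh w from funext tanh_eq_sinh_div_cosh]
  exact continuous_sinh.continuousAt.div continuous_cosh.continuousAt h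

lemma tendsto_div_tanh_half : Tendsto (fun z : ℂ => z / tanh (z / 2)) (𝓝[≠] 0) (𝓝 2) := by
  have hsinh : Tendsto (fun z : ℂ => sinh (z / 2) / z) (𝓝[≠] 0) (𝓝 (1 / 2)) := by
    have h := ((hasDerivAt_id (0 : ℂ)).div_const 2).csinh.tendsto_slope_zero
    simpa [div_eq_inv_mul] using h
  have hcosh : Tendsto (fun z : ℂ => cosh (z / 2)) (𝓝[≠] 0) (𝓝 1) := by
    simpa using ((by fun_prop : Continuous fun z : ℂ => cosh (z / 2)).tendsto 0).mono_left
      nhdsWithin_le_nhds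
  have h := hcosh.div hsinh (one_div_ne_zero two_ne_zero)
  rw [one_div_one_div] at h
  refine h.congr fun z => ?_
  rw [Pi.div_apply, tanh_eq_sinh_div_cosh, div_div_eq_mul_div, div_div_eq_mul_div, mul_comm]

lemma I_mul_pi_mul (x : ℝ) : I * π * x = ((π * x : ℝ) : ℂ) * I := by
  push_cast; ring

lemma tanh_I_mul_pi (x : ℝ) : tanh (I * π * x) = Real.tan (π * x) * I := by
  rw [I_mul_pi_mul, tanh_mul_I, ofReal_tan]

lemma cosh_I_mul_pi (x : ℝ) : cosh (I * π * x) = Real.cos (π * x) := by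
  rw [I_mul_pi_mul, cosh_mul_I, ofReal_cos]

end Complex

lemma fblock_arg_add (α β : ℝ) :
    (I * π * α + I * π * β) / 2 = I * π * ((α + β) / 2 : ℝ) := by
  push_cast; ring

lemma fblock_arg_sub (α β : ℝ) :
    (I * π * α - I * π * β) / 2 = I * π * ((α - β) / 2 : ℝ) := by
  push_cast; ring

lemma fblock_I_mul_pi (α β : ℝ) :
    fblock β (I * π * α) = (Real.tan (π * ((α + β) / 2)) / Real.tan (π * ((α - β) / 2)) : ℝ) := by
  rw [fblock, fblock_arg_add, fblock_arg_sub, tanh_I_mul_pi, tanh_I_mul_pi,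
    mul_div_mul_right _ _ I_ne_zero, ofReal_div]

lemma continuousAt_fblock {α β : ℝ} (hadd : Real.cos (π * ((α + β) / 2)) ≠ 0)
    (hsub : Real.sin (π * (α - β)) ≠ 0) : ContinuousAt (fblock β) (I * π * α) := by
  rw [show π * (α - β) = 2 * (π * ((α - β) / 2)) by ring, Real.sin_two_mul] at hsub
  have hsin : Real.sin (π * ((α - β) / 2)) ≠ 0 := right_ne_zero_of_mul (left_ne_zero_of_mul hsub)
  have hcos : Real.cos (π * ((α - β) / 2)) ≠ 0 := right_ne_zero_of_mul hsub
  have hnum : ContinuousAt (fun θ => tanh ((θ + I * π * β) / 2)) (I * π * α) := by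
    refine (continuousAt_tanh ?_).comp (f := fun θ => (θ + I * π * β) / 2) (by fun_prop)
    rw [fblock_arg_add, cosh_I_mul_pi]
    exact_mod_cast hadd
  have hden : ContinuousAt (fun θ => tanh ((θ - I * π * β) / 2)) (I * π * α) := by
    refine (continuousAt_tanh ?_).comp (f := fun θ => (θ - I * π * β) / 2) (by fun_prop)
    rw [fblock_arg_sub, cosh_I_mul_pi]
    exact_mod_cast hcos
  have hden_ne : tanh ((I * π * α - I * π * β) / 2) ≠ 0 := by
    rw [fblock_arg_sub, tanh_I_mul_pi, Real.tan_eq_sin_div_cos]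
    exact mul_ne_zero (ofReal_ne_zero.2 (div_ne_zero hsin hcos)) I_ne_zero
  exact hnum.div hden hden_ne

lemma tendsto_sub_mul_fblock {α : ℝ} (h : Real.cos (π * α) ≠ 0) :
    Tendsto (fun θ => (θ - I * π * α) * fblock α θ) (𝓝[≠] (I * π * α))
      (𝓝 (2 * (Real.tan (π * α) * I))) := by
  set p : ℂ := I * π * α
  have hshift : Tendsto (fun θ => θ - p) (𝓝[≠] p) (𝓝[≠] 0) := by
    simpa using ((hasDerivAt_id p).sub_const p).tendsto_nhdsNE one_ne_zero
  have hnum : ContinuousAt (fun θ => tanh ((θ + p) / 2)) p := by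
    refine (continuousAt_tanh ?_).comp (f := fun θ => (θ + p) / 2) (by fun_prop)
    rw [add_self_div_two, cosh_I_mul_pi]
    exact_mod_cast h
  have hlim := (tendsto_div_tanh_half.comp hshift).mul hnum.continuousWithinAt.tendsto
  rw [add_self_div_two, tanh_I_mul_pi] at hlim
  refine hlim.congr fun θ => ?_
  simp only [Function.comp_apply, fblock]
  ring

lemma residue_tan_product_eq :
    2 * Real.tan (π * (12 / 18)) *
        (Real.tan (π * ((12 / 18 + 8 / 18) / 2)) / Real.tan (π * ((12 / 18 - 8 / 18) / 2))) *
        (Real.tan (π * ((12 / 18 + 2 / 18) / 2)) / Real.tan (π * ((12 / 18 - 2 / 18) / 2))) =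
      2 * √3 * (Real.cos (π / 18) / Real.sin (π / 18)) *
        (Real.cos (π / 9) / Real.sin (π / 9)) ^ 2 *
        (Real.sin (2 * π / 9) / Real.cos (2 * π / 9)) := by
  have hpi := Real.pi_pos
  have hsin₁ : Real.sin (π / 18) ≠ 0 := (Real.sin_pos_of_pos_of_lt_pi (by positivity) (by linarith)).ne'
  have hsin₂ : Real.sin (π / 9) ≠ 0 := (Real.sin_pos_of_pos_of_lt_pi (by positivity) (by linarith)).ne'
  have hsin₃ : Real.sin (2 * π / 9) ≠ 0 :=
    (Real.sin_pos_of_pos_of_lt_pi (by positivity) (by linarith)).ne'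
  have hcos₂ : Real.cos (π / 9) ≠ 0 := (Real.cos_pos_of_mem_Ioo ⟨by linarith, by linarith⟩).ne'
  have hcos₃ : Real.cos (2 * π / 9) ≠ 0 :=
    (Real.cos_pos_of_mem_Ioo ⟨by linarith, by linarith⟩).ne'
  rw [show π * (12 / 18) = π - π / 3 by ring,
    show π * ((12 / 18 + 8 / 18) / 2) = π - (π / 2 - π / 18) by ring,
    show π * ((12 / 18 - 8 / 18) / 2) = π / 9 by ring,
    show π * ((12 / 18 + 2 / 18) / 2) = π / 2 - π / 9 by ring,
    show π * ((12 / 18 - 2 / 18) / 2) = π / 2 - 2 * π / 9 by ring,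
    Real.tan_pi_sub, Real.tan_pi_sub, Real.tan_pi_div_two_sub, Real.tan_pi_div_two_sub,
    Real.tan_pi_div_two_sub, Real.tan_pi_div_three, Real.tan_eq_sin_div_cos (π / 18),
    Real.tan_eq_sin_div_cos (π / 9), Real.tan_eq_sin_div_cos (2 * π / 9)]
  field_simp

/-- the residue of `S₂₂` at the A₂ self-fusion pole `θ = 12iπ/18` equals
`i·|Γ₂₂²|²` with `|Γ₂₂²|² = 2√3·cot(π/18)·cot²(π/9)·tan(2π/9)`. -/
theorem S22_residue_at_A2 :
    Tendsto (fun θ : ℂ => (θ - 12 * (Real.pi : ℂ) * Complex.I / 18) * S22 θ)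
      (nhdsWithin (12 * (Real.pi : ℂ) * Complex.I / 18)
        {(12 * (Real.pi : ℂ) * Complex.I / 18 : ℂ)}ᶜ)
      (nhds (Complex.I *
        ((2 * Real.sqrt 3 * (Real.cos (Real.pi / 18) / Real.sin (Real.pi / 18)) *
          (Real.cos (Real.pi / 9) / Real.sin (Real.pi / 9)) ^ 2 *
          (Real.sin (2 * Real.pi / 9) / Real.cos (2 * Real.pi / 9)) : ℝ) : ℂ))) := by
  have hpi := Real.pi_pos
  have hpole : 12 * (π : ℂ) * I / 18 = I * π * ((12 / 18 : ℝ) : ℂ) := by push_cast; ring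
  have hsing := tendsto_sub_mul_fblock (α := 12 / 18) (by
    rw [show π * (12 / 18) = π - π / 3 by ring, Real.cos_pi_sub, Real.cos_pi_div_three]
    norm_num)
  have hreg₁ := continuousAt_fblock (α := 12 / 18) (β := 8 / 18)
    (Real.cos_neg_of_pi_div_two_lt_of_lt (by linarith) (by linarith)).ne
    (Real.sin_pos_of_pos_of_lt_pi (by linarith) (by linarith)).ne'
  have hreg₂ := continuousAt_fblock (α := 12 / 18) (β := 2 / 18)
    (Real.cos_pos_of_mem_Ioo ⟨by linarith, by linarith⟩).ne'
    (Real.sin_pos_of_pos_of_lt_pi (by linarith) (by linarith)).ne'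
  rw [hpole]
  convert hsing.mul (hreg₁.mul hreg₂).continuousWithinAt.tendsto using 2
  · simp only [S22, Pi.mul_apply]
    ring
  · rw [Pi.mul_apply, fblock_I_mul_pi, fblock_I_mul_pi, ← residue_tan_product_eq]
    push_cast
    ring
end
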